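/- Let X be a Banach function space on the unit circle. The following are equivalent: (a) the trigonometric polynomials are dense in X; (b) the continuous functions C(T) are dense in X; (c) X is separable. -/

import Mathlib

open MeasureTheory Filter Real Set
open scoped ENNReal Topology NNReal

noncomputable section

instance : Fact (0 < 2 * π) := ⟨by positivity⟩

/-- The unit circle, realized as `ℝ / 2πℤ`. -/
abbrev UC := AddCircle (2 * π)

/-- Normalized Lebesgue (Haar) measure on the circle. -/
def m : Measure UC := AddCircle.haarAddCircle

/-- The `n`-th Fejér kernel on the circle. -/
def fejer (n : ℕ) (x : UC) : ℂ :=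
  ∑ k ∈ Finset.Icc (-(n : ℤ)) (n : ℤ), ((1 - (|k| : ℝ) / (n + 1)) : ℂ) * fourier k x

/-- The `n`-th Fejér kernel as a function of the angle `θ`. -/
def fejerR (n : ℕ) (θ : ℝ) : ℝ :=
  ∑ k ∈ Finset.Icc (-(n : ℤ)) (n : ℤ), (1 - (|k| : ℝ) / (n + 1)) * Real.cos (k * θ)

/-- Convolution on the circle with respect to the normalized measure. -/
def conv (f g : UC → ℂ) (x : UC) : ℂ := ∫ y, f (x - y) * g y ∂m

/-- Convolution of nonnegative functions on the circle. -/
def convNN (f g : UC → ℝ≥0∞) (x : UC) : ℝ≥0∞ := ∫⁻ y, f (x - y) * g y ∂m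

/-- The set of trigonometric (Laurent) polynomials on the circle. -/
def TrigPoly : Set (UC → ℂ) :=
  {q | ∃ (n : ℕ) (α : ℤ → ℂ), q = fun x => ∑ k ∈ Finset.Icc (-(n : ℤ)) (n : ℤ), α k * fourier k x}

/-- The set of analytic polynomials on the circle. -/
def AnalyticPoly : Set (UC → ℂ) :=
  {q | ∃ (n : ℕ) (α : ℕ → ℂ), q = fun x => ∑ k ∈ Finset.range (n + 1), α k * fourier (k : ℤ) x}

/-- An arc of the circle. -/
def IsArc (I : Set UC) : Prop := ∃ (c : UC) (r : ℝ), 0 < r ∧ I = Metric.ball c r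

/-- The (uncentered) Hardy–Littlewood maximal function over arcs of the circle. -/
def HLmax (f : UC → ℂ) (t : UC) : ℝ≥0∞ :=
  ⨆ (I : Set UC) (_ : IsArc I ∧ t ∈ I), (m I)⁻¹ * ∫⁻ x in I, (‖f x‖₊ : ℝ≥0∞) ∂m

/-- A Banach function norm on the circle (Bennett–Sharpley axioms (A1)–(A5)). -/
structure BFNorm where
  ρ : (UC → ℝ≥0∞) → ℝ≥0∞
  eq_zero_iff : ∀ f : UC → ℝ≥0∞, Measurable f → (ρ f = 0 ↔ f =ᵐ[m] 0)
  smul_eq : ∀ (f : UC → ℝ≥0∞) (a : ℝ≥0), ρ (fun t => (a : ℝ≥0∞) * f t) = a * ρ f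
  triangle : ∀ f g : UC → ℝ≥0∞, ρ (f + g) ≤ ρ f + ρ g
  mono : ∀ f g : UC → ℝ≥0∞, f ≤ᵐ[m] g → ρ f ≤ ρ g
  fatou : ∀ (fs : ℕ → UC → ℝ≥0∞) (f : UC → ℝ≥0∞), (∀ n, fs n ≤ᵐ[m] fs (n + 1)) →
    (∀ᵐ t ∂m, Tendsto (fun n => fs n t) atTop (𝓝 (f t))) →
    Tendsto (fun n => ρ (fs n)) atTop (𝓝 (ρ f))
  finite_indicator : ∀ E : Set UC, MeasurableSet E → ρ (E.indicator 1) < ⊤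
  integral_le : ∀ E : Set UC, MeasurableSet E → ∃ C : ℝ≥0∞, 0 < C ∧ C < ⊤ ∧
    ∀ f : UC → ℝ≥0∞, ∫⁻ t in E, f t ∂m ≤ C * ρ f

/-- The norm of a complex-valued function in the Banach function space. -/
def BFNorm.N (ρ : BFNorm) (f : UC → ℂ) : ℝ≥0∞ := ρ.ρ (fun t => (‖f t‖₊ : ℝ≥0∞))

/-- Membership in the Banach function space `X`. -/
def BFNorm.mem (ρ : BFNorm) (f : UC → ℂ) : Prop := AEStronglyMeasurable f m ∧ ρ.N f < ⊤

/-- The associate norm `ρ'`. -/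
def BFNorm.assoc (ρ : BFNorm) (g : UC → ℝ≥0∞) : ℝ≥0∞ :=
  ⨆ (f : UC → ℝ≥0∞) (_ : Measurable f ∧ ρ.ρ f ≤ 1), ∫⁻ t, f t * g t ∂m

/-- The associate-space norm of a complex-valued function. -/
def BFNorm.Nassoc (ρ : BFNorm) (f : UC → ℂ) : ℝ≥0∞ := ρ.assoc (fun t => (‖f t‖₊ : ℝ≥0∞))

/-- Separability of the Banach function space `X`. -/
def BFNorm.Separable (ρ : BFNorm) : Prop :=
  ∃ D : Set (UC → ℂ), D.Countable ∧ (∀ g ∈ D, ρ.mem g) ∧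
    ∀ f, ρ.mem f → ∀ ε : ℝ≥0∞, 0 < ε → ∃ g ∈ D, ρ.N (f - g) < ε

/-- Density of a set of functions in the Banach function space `X`. -/
def BFNorm.DenseIn (ρ : BFNorm) (S : Set (UC → ℂ)) : Prop :=
  ∀ f, ρ.mem f → ∀ ε : ℝ≥0∞, 0 < ε → ∃ g ∈ S, ρ.N (f - g) < ε

/-- Rearrangement invariance: equimeasurable functions have equal norm. -/
def BFNorm.RearrInv (ρ : BFNorm) : Prop :=
  ∀ f g : UC → ℝ≥0∞, Measurable f → Measurable g →
    (∀ lam : ℝ≥0∞, m {t | lam < f t} = m {t | lam < g t}) → ρ.ρ f = ρ.ρ g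

/-- Boundedness of the Hardy–Littlewood maximal operator on the associate space. -/
def MaximalBoundedOnAssoc (ρ : BFNorm) : Prop :=
  ∃ C : ℝ≥0∞, C < ⊤ ∧ ∀ f : UC → ℂ, ρ.assoc (HLmax f) ≤ C * ρ.Nassoc f

/-- The modular of the variable Lebesgue space `L^{p(·)}`. -/
def VLmodular (p : UC → ℝ) (f : UC → ℂ) : ℝ≥0∞ := ∫⁻ t, (‖f t‖₊ : ℝ≥0∞) ^ (p t) ∂m

/-- Membership in the variable Lebesgue space `L^{p(·)}`. -/
def VLmem (p : UC → ℝ) (f : UC → ℂ) : Prop :=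
  AEStronglyMeasurable f m ∧ ∃ c : ℝ, 0 < c ∧ VLmodular p (fun t => c⁻¹ • f t) < ⊤

/-- The Luxemburg–Nakano norm of the variable Lebesgue space `L^{p(·)}`. -/
def VLnorm (p : UC → ℝ) (f : UC → ℂ) : ℝ :=
  sInf {c : ℝ | 0 < c ∧ VLmodular p (fun t => c⁻¹ • f t) ≤ 1}

/-- Local log-Hölder continuity of a function on the circle. -/
def LocLogHolder (r : UC → ℝ) : Prop :=
  ∃ C₀ : ℝ, 0 < C₀ ∧ ∀ x y : UC, dist x y < 1/2 → |r x - r y| ≤ C₀ / (-Real.log (dist x y))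

end

noncomputable section

/-!
`C(T) ⊂ X` continuously, since `ρ (|g|) ≤ ‖g‖∞ ρ 1`. Hence density of the trigonometric
polynomials (uniformly dense in `C(T)`) and of `C(T)` are equivalent, and either gives
separability because `C(T)` is separable.

Conversely, separability forces absolute continuity of the norm: if `ρ (f 𝟙_{E n}) ≥ ε` along
sets `E n` decreasing to a null set, Fatou's property yields disjoint shells `B k` with
`ρ (f 𝟙_{B k}) > δ`, and the functions `f 𝟙_{⋃_{k ∈ A} B k}`, `A ⊆ ℕ`, form an uncountable
`δ`-separated family. Absolute continuity lets us truncate `f` to a bounded function, and makes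
`ρ (𝟙_E)` uniformly small when `m E` is small, so that a bounded function can be replaced by a
continuous one agreeing with it up to a small error outside a set of small measure.
-/

open Function

lemma continuous_of_mem_trigPoly {q : UC → ℂ} (hq : q ∈ TrigPoly) : Continuous q := by
  obtain ⟨n, α, rfl⟩ := hq
  fun_prop

lemma coe_mem_trigPoly_of_mem_span {p : C(UC, ℂ)}
    (hp : p ∈ Submodule.span ℂ (range (fourier (T := 2 * π)))) : ⇑p ∈ TrigPoly := by
  obtain ⟨c, rfl⟩ := Finsupp.mem_span_range_iff_exists_finsupp.1 hp
  set n : ℕ := c.support.sup Int.natAbs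
  have hsupp : c.support ⊆ Finset.Icc (-(n : ℤ)) n :=
    fun k hk => by have := Finset.le_sup (f := Int.natAbs) hk; rw [Finset.mem_Icc]; omega
  refine ⟨n, c, ?_⟩
  ext x
  simp only [Finsupp.sum, ContinuousMap.coe_sum, Finset.sum_apply, ContinuousMap.coe_smul,
    Pi.smul_apply, smul_eq_mul]
  exact Finset.sum_subset hsupp fun k _ hk => by rw [Finsupp.notMem_support_iff.1 hk, zero_mul]

lemma exists_trigPoly_norm_sub_le {g : UC → ℂ} (hg : Continuous g) {r : ℝ} (hr : 0 < r) :
    ∃ q ∈ TrigPoly, ∀ x, ‖g x - q x‖ ≤ r := by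
  have hmem : (⟨g, hg⟩ : C(UC, ℂ)) ∈
      closure (Submodule.span ℂ (range (fourier (T := 2 * π))) : Set C(UC, ℂ)) := by
    rw [← Submodule.topologicalClosure_coe, span_fourier_closure_eq_top]; trivial
  obtain ⟨p, hp, hgp⟩ := Metric.mem_closure_iff.1 hmem r hr
  exact ⟨p, coe_mem_trigPoly_of_mem_span hp, fun x =>
    (dist_eq_norm (g x) (p x)).symm.trans_le ((ContinuousMap.dist_apply_le_dist x).trans hgp.le)⟩

def clampC (M : ℝ≥0) (z : ℂ) : ℂ :=
  (projIcc (-M : ℝ) M (neg_le_self M.coe_nonneg) z.re : ℝ) +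
    (projIcc (-M : ℝ) M (neg_le_self M.coe_nonneg) z.im : ℝ) * Complex.I

lemma continuous_clampC (M : ℝ≥0) : Continuous (clampC M) := by
  unfold clampC; fun_prop

lemma norm_clampC_le (M : ℝ≥0) (z : ℂ) : ‖clampC M z‖ ≤ 2 * M := by
  have hre := abs_le.2 (projIcc (-M : ℝ) M (neg_le_self M.coe_nonneg) z.re).2
  have him := abs_le.2 (projIcc (-M : ℝ) M (neg_le_self M.coe_nonneg) z.im).2
  calc ‖clampC M z‖ ≤ |(clampC M z).re| + |(clampC M z).im| := Complex.norm_le_abs_re_add_abs_im _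
    _ ≤ M + M := by simpa [clampC] using add_le_add hre him
    _ = 2 * M := by ring

lemma dist_clampC_le {M : ℝ≥0} {w : ℂ} (hw : ‖w‖ ≤ M) (z : ℂ) :
    dist (clampC M z) w ≤ dist z w := by
  have hfix : ∀ x : ℝ, |x| ≤ M → (projIcc (-M : ℝ) M (neg_le_self M.coe_nonneg) x : ℝ) = x :=
    fun x hx => by rw [projIcc_of_mem _ (abs_le.1 hx)]
  have hre := abs_projIcc_sub_projIcc (neg_le_self M.coe_nonneg) (c := z.re) (d := w.re)
  have him := abs_projIcc_sub_projIcc (neg_le_self M.coe_nonneg) (c := z.im) (d := w.im)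
  rw [hfix _ ((Complex.abs_re_le_norm w).trans hw)] at hre
  rw [hfix _ ((Complex.abs_im_le_norm w).trans hw)] at him
  rw [Complex.dist_eq_re_im, Complex.dist_eq_re_im]
  refine Real.sqrt_le_sqrt (add_le_add ?_ ?_)
  · simpa [clampC] using sq_le_sq.2 hre
  · simpa [clampC] using sq_le_sq.2 him

instance : IsProbabilityMeasure m := by unfold m; infer_instance

instance : m.WeaklyRegular := by unfold m; infer_instance

namespace BFNorm

variable {ρ : BFNorm}

lemma rho_one_lt_top (ρ : BFNorm) : ρ.ρ 1 < ⊤ := by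
  simpa using ρ.finite_indicator univ MeasurableSet.univ

lemma N_mono {f g : UC → ℂ} (h : ∀ᵐ t ∂m, ‖f t‖ ≤ ‖g t‖) : ρ.N f ≤ ρ.N g :=
  ρ.mono _ _ (h.mono fun _ ht => by simpa [← NNReal.coe_le_coe] using ht)

lemma N_congr {f g : UC → ℂ} (h : f =ᵐ[m] g) : ρ.N f = ρ.N g :=
  le_antisymm (N_mono (h.mono fun _ ht => by rw [ht])) (N_mono (h.mono fun _ ht => by rw [ht]))

lemma N_add_le (f g : UC → ℂ) : ρ.N (f + g) ≤ ρ.N f + ρ.N g :=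
  (ρ.mono _ _ (.of_forall fun t => by
      simp only [Pi.add_apply]; exact_mod_cast nnnorm_add_le (f t) (g t))).trans
    (ρ.triangle _ _)

lemma N_sub_comm (f g : UC → ℂ) : ρ.N (f - g) = ρ.N (g - f) := by
  simp only [BFNorm.N, Pi.sub_apply, ← enorm_eq_nnnorm, enorm_sub_rev]

lemma N_sub_le_N_sub_add_N_sub (f g h : UC → ℂ) :
    ρ.N (f - h) ≤ ρ.N (f - g) + ρ.N (g - h) := by
  simpa using N_add_le (ρ := ρ) (f - g) (g - h)

lemma N_sub_lt_of_lt_half {f g h : UC → ℂ} {ε : ℝ≥0∞} (hfg : ρ.N (f - g) < ε / 2)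
    (hgh : ρ.N (g - h) < ε / 2) : ρ.N (f - h) < ε :=
  (N_sub_le_N_sub_add_N_sub f g h).trans_lt (ENNReal.add_halves ε ▸ ENNReal.add_lt_add hfg hgh)

lemma N_indicator_le (f : UC → ℂ) (S : Set UC) : ρ.N (S.indicator f) ≤ ρ.N f :=
  N_mono (.of_forall fun t => norm_indicator_le_norm_self f t)

lemma mem.indicator {f : UC → ℂ} (hf : ρ.mem f) {S : Set UC} (hS : MeasurableSet S) :
    ρ.mem (S.indicator f) :=
  ⟨hf.1.indicator hS, (N_indicator_le f S).trans_lt hf.2⟩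

lemma N_le_of_norm_le {f : UC → ℂ} {C : ℝ≥0} (h : ∀ t, ‖f t‖ ≤ C) :
    ρ.N f ≤ C * ρ.ρ 1 := by
  calc ρ.N f ≤ ρ.ρ (fun t => (C : ℝ≥0∞) * (1 : UC → ℝ≥0∞) t) :=
        ρ.mono _ _ (.of_forall fun t => by simpa [← NNReal.coe_le_coe] using h t)
    _ = C * ρ.ρ 1 := ρ.smul_eq 1 C

lemma N_le_of_norm_le_of_notMem {u : UC → ℂ} {r C : ℝ≥0} {E : Set UC}
    (hE : ∀ t ∉ E, ‖u t‖ ≤ r) (hC : ∀ t, ‖u t‖ ≤ C) :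
    ρ.N u ≤ r * ρ.ρ 1 + C * ρ.ρ (E.indicator 1) := by
  have hpt : (fun t => (‖u t‖₊ : ℝ≥0∞)) ≤
      (fun t => (r : ℝ≥0∞) * (1 : UC → ℝ≥0∞) t) + fun t => (C : ℝ≥0∞) * E.indicator 1 t := by
    intro t
    by_cases ht : t ∈ E
    · simpa [ht] using ENNReal.coe_le_coe.2 (le_add_of_nonneg_of_le (zero_le (a := r)) (hC t))
    · simpa [ht, ← NNReal.coe_le_coe] using hE t ht
  calc ρ.N u ≤ _ := ρ.mono _ _ (.of_forall hpt)
    _ ≤ _ := ρ.triangle _ _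
    _ = _ := by rw [ρ.smul_eq, ρ.smul_eq]

lemma mem_of_continuous {g : UC → ℂ} (hg : Continuous g) : ρ.mem g :=
  ⟨hg.aestronglyMeasurable, (N_le_of_norm_le (C := ‖(⟨g, hg⟩ : C(UC, ℂ))‖₊)
    fun t => ContinuousMap.norm_coe_le_norm ⟨g, hg⟩ t).trans_lt
      (ENNReal.mul_lt_top ENNReal.coe_lt_top ρ.rho_one_lt_top)⟩

lemma DenseIn.mono {S T : Set (UC → ℂ)} (hS : ρ.DenseIn S) (hST : S ⊆ T) : ρ.DenseIn T :=
  fun f hf ε hε => (hS f hf ε hε).imp fun _ ⟨hg, hfg⟩ => ⟨hST hg, hfg⟩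

lemma DenseIn.of_uniform_approx {S T : Set (UC → ℂ)} (hS : ρ.DenseIn S)
    (hST : ∀ s ∈ S, ∀ r : ℝ≥0, 0 < r → ∃ t ∈ T, ∀ x, ‖s x - t x‖ ≤ r) : ρ.DenseIn T := by
  intro f hf ε hε
  obtain ⟨s, hs, hfs⟩ := hS f hf (ε / 2) (ENNReal.half_pos hε.ne')
  obtain ⟨r, hr, hrρ⟩ := ENNReal.exists_nnreal_pos_mul_lt ρ.rho_one_lt_top.ne
    (ENNReal.half_pos hε.ne').ne'
  obtain ⟨t, ht, hst⟩ := hST s hs r hr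
  exact ⟨t, ht, N_sub_lt_of_lt_half hfs ((N_le_of_norm_le hst).trans_lt hrρ)⟩

lemma DenseIn.trigPoly_of_continuous (h : ρ.DenseIn {f : UC → ℂ | Continuous f}) :
    ρ.DenseIn TrigPoly :=
  h.of_uniform_approx fun _ hs _ hr => exists_trigPoly_norm_sub_le hs (NNReal.coe_pos.2 hr)

lemma DenseIn.separable_of_continuous (h : ρ.DenseIn {f : UC → ℂ | Continuous f}) :
    ρ.Separable := by
  obtain ⟨D, hDc, hD⟩ := TopologicalSpace.exists_countable_dense C(UC, ℂ)
  refine ⟨(⇑) '' D, hDc.image _, ?_, h.of_uniform_approx fun s hs r hr => ?_⟩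
  · rintro _ ⟨d, -, rfl⟩
    exact mem_of_continuous d.continuous
  · obtain ⟨d, hsd, hdD⟩ := Metric.dense_iff.1 hD ⟨s, hs⟩ r hr
    exact ⟨d, mem_image_of_mem _ hdD, fun x => (dist_eq_norm (s x) (d x)).symm.trans_le
      ((ContinuousMap.dist_apply_le_dist x).trans (Metric.mem_ball'.1 hsd).le)⟩

lemma Separable.countable_of_pairwise_le_N_sub (hsep : ρ.Separable) {ι : Type*}
    {g : ι → UC → ℂ} (hg : ∀ i, ρ.mem (g i)) {ε : ℝ≥0∞} (hε : 0 < ε)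
    (hgε : Pairwise fun i j => ε ≤ ρ.N (g i - g j)) : Countable ι := by
  obtain ⟨D, hD, -, hdense⟩ := hsep
  choose c hcD hc using fun i => hdense (g i) (hg i) (ε / 2) (ENNReal.half_pos hε.ne')
  have : Countable D := hD.to_subtype
  refine Function.Injective.countable (f := fun i => (⟨c i, hcD i⟩ : D)) fun i j hij => ?_
  by_contra hne
  have hcij : c i = c j := congrArg Subtype.val hij
  refine (hgε hne).not_gt (N_sub_lt_of_lt_half (hc i) ?_)
  rw [hcij, N_sub_comm]
  exact hc j

/-- Restricting `f` to the unions of the pieces `B k`, `k ∈ A`, for all `A : Set ℕ` would give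
uncountably many members of `X` that are `ε`-apart. -/
lemma Separable.exists_N_indicator_lt_of_pairwise_disjoint (hsep : ρ.Separable) {f : UC → ℂ}
    (hf : ρ.mem f) {B : ℕ → Set UC} (hBm : ∀ k, MeasurableSet (B k))
    (hB : Pairwise (Disjoint on B)) {ε : ℝ≥0∞} (hε : 0 < ε) :
    ∃ k, ρ.N ((B k).indicator f) < ε := by
  by_contra! hbig
  set g : Set ℕ → UC → ℂ := fun A => (⋃ k ∈ A, B k).indicator f
  have hle : ∀ {A A' : Set ℕ} {k : ℕ}, k ∈ A → k ∉ A' → ε ≤ ρ.N (g A - g A') := by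
    intro A A' k hkA hkA'
    refine (hbig k).trans (N_mono (.of_forall fun t => ?_))
    by_cases ht : t ∈ B k
    · have hA' : t ∉ ⋃ l ∈ A', B l := by
        simp only [mem_iUnion, not_exists]
        exact fun l hl htl => disjoint_left.1 (hB (ne_of_mem_of_not_mem hl hkA')) htl ht
      simp [g, ht, hA', mem_biUnion hkA ht]
    · simp [ht]
  have hgε : Pairwise fun A A' => ε ≤ ρ.N (g A - g A') := by
    intro A A' hne
    obtain ⟨k, hk⟩ := not_forall.1 (mt Set.ext hne)
    by_cases hkA : k ∈ A
    · exact hle hkA fun h => hk (iff_of_true hkA h)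
    · rw [N_sub_comm]
      exact hle (not_not.1 fun h => hk (iff_of_false hkA h)) hkA
  have := hsep.countable_of_pairwise_le_N_sub
    (fun A => hf.indicator (.biUnion (to_countable A) fun k _ => hBm k)) hε hgε
  obtain ⟨e, he⟩ := exists_injective_nat (Set ℕ)
  exact Function.cantor_injective e he

lemma tendsto_N_indicator_diff {E : ℕ → Set UC} (hE : Antitone E)
    (hnull : ∀ᵐ t ∂m, ∃ n, t ∉ E n) (f : UC → ℂ) (S : Set UC) :
    Tendsto (fun j => ρ.N ((S \ E j).indicator f)) atTop (𝓝 (ρ.N (S.indicator f))) := by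
  simp only [BFNorm.N, nnnorm_indicator_eq_indicator_nnnorm, ENNReal.coe_indicator]
  refine ρ.fatou _ _ (fun j => .of_forall fun t => ?_) (hnull.mono fun t ⟨n, hn⟩ => ?_)
  · exact indicator_le_indicator_of_subset (sdiff_subset_sdiff_right (hE j.le_succ))
      (fun _ => zero_le) t
  · refine tendsto_const_nhds.congr' ((eventually_ge_atTop n).mono fun j hj => ?_)
    have : t ∉ E j := fun h => hn (hE hj h)
    by_cases ht : t ∈ S <;> simp [ht, this]

lemma Separable.exists_N_indicator_lt_of_antitone (hsep : ρ.Separable) {f : UC → ℂ}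
    (hf : ρ.mem f) {E : ℕ → Set UC} (hEm : ∀ n, MeasurableSet (E n)) (hE : Antitone E)
    (hnull : ∀ᵐ t ∂m, ∃ n, t ∉ E n) {ε : ℝ≥0∞} (hε : 0 < ε) :
    ∃ n, ρ.N ((E n).indicator f) < ε := by
  by_contra! hbig
  obtain ⟨δ, hδ, hδε⟩ := exists_between hε
  have hshell : ∀ n, ∃ j, n < j ∧ δ < ρ.N ((E n \ E j).indicator f) := fun n =>
    (((tendsto_N_indicator_diff hE hnull f (E n)).eventually
      (eventually_gt_nhds (hδε.trans_le (hbig n)))).and (eventually_gt_atTop n)).exists.imp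
      fun _ h => ⟨h.2, h.1⟩
  choose next hnext hδnext using hshell
  set n : ℕ → ℕ := fun k => next^[k] 0
  have hn_succ : ∀ k, n (k + 1) = next (n k) := fun k => Function.iterate_succ_apply' next k 0
  have hn : StrictMono n := strictMono_nat_of_lt_succ fun k => hn_succ k ▸ hnext (n k)
  have hdisj : Pairwise (Disjoint on fun k => E (n k) \ E (n (k + 1))) :=
    (pairwise_disjoint_on _).2 fun k l hkl => disjoint_left.2 fun t htk htl =>
      htk.2 (hE (hn.monotone (Nat.succ_le_of_lt hkl)) htl.1)
  obtain ⟨k, hk⟩ := hsep.exists_N_indicator_lt_of_pairwise_disjoint hf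
    (fun k => (hEm _).diff (hEm _)) hdisj hδ
  exact (hδnext (n k)).not_gt (hn_succ k ▸ hk)

/-- Otherwise sets `E k` with `m (E k) < 2⁻ᵏ` and `ρ (𝟙_{E k}) ≥ ε` would, by Borel–Cantelli,
violate absolute continuity along their tails `⋃_{k ≥ n} E k`. -/
lemma Separable.exists_rho_indicator_lt (hsep : ρ.Separable) {ε : ℝ≥0∞} (hε : 0 < ε) :
    ∃ δ > 0, ∀ E : Set UC, MeasurableSet E → m E < δ → ρ.ρ (E.indicator 1) < ε := by
  by_contra! hbig
  choose E hEm hEsmall hEbig using fun k : ℕ =>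
    hbig ((2 : ℝ≥0∞)⁻¹ ^ k) (ENNReal.pow_pos (ENNReal.inv_pos.2 ENNReal.ofNat_ne_top) k)
  have hsum : ∑' k, m (E k) ≠ ⊤ := ne_top_of_le_ne_top
    (by rw [ENNReal.tsum_geometric, ENNReal.one_sub_inv_two, inv_inv]; exact ENNReal.ofNat_ne_top)
    (ENNReal.tsum_le_tsum fun k => (hEsmall k).le)
  set F : ℕ → Set UC := fun n => ⋃ k ∈ Ici n, E k
  have hnull : ∀ᵐ t ∂m, ∃ n, t ∉ F n := (ae_eventually_notMem hsum).mono fun t ht => by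
    obtain ⟨n, hn⟩ := eventually_atTop.1 ht
    exact ⟨n, by simpa [F] using hn⟩
  have hF : Antitone F := fun a b hab => biUnion_subset_biUnion_left (Ici_subset_Ici.2 hab)
  obtain ⟨n, hn⟩ := hsep.exists_N_indicator_lt_of_antitone (E := F)
    (mem_of_continuous (continuous_const (y := (1 : ℂ))))
    (fun n => .biUnion (to_countable _) fun k _ => hEm k) hF hnull hε
  refine (hEbig n).not_gt (lt_of_le_of_lt (ρ.mono _ _ (.of_forall fun t => ?_)) hn)
  have hEF : E n ⊆ F n := subset_biUnion_of_mem (u := E) (mem_Ici.2 le_rfl)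
  by_cases ht : t ∈ E n
  · rw [indicator_of_mem ht, indicator_of_mem (hEF ht)]
    simp
  · simp [ht]

/-- Approximate `h` in `L¹` by a continuous `g₀` and clamp it to `h`'s bound: then `h - g` is
small off the Chebyshev set of `h - g₀`, which has small measure, and bounded on it. -/
lemma Separable.exists_continuous_N_sub_lt_of_norm_le (hsep : ρ.Separable) {h : UC → ℂ}
    (hm : StronglyMeasurable h) {M : ℝ≥0} (hM : ∀ t, ‖h t‖ ≤ M) {ε : ℝ≥0∞} (hε : 0 < ε) :
    ∃ g : UC → ℂ, Continuous g ∧ ρ.N (h - g) < ε := by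
  have hε2 := ENNReal.half_pos hε.ne'
  obtain ⟨r, hr, hrρ⟩ := ENNReal.exists_nnreal_pos_mul_lt ρ.rho_one_lt_top.ne hε2.ne'
  obtain ⟨δ, hδ, hδρ⟩ := hsep.exists_rho_indicator_lt
    (ENNReal.div_pos_iff.2 ⟨hε2.ne', ENNReal.coe_ne_top (r := 3 * M)⟩)
  obtain ⟨η, hη, hηδ⟩ := exists_between hδ
  have hrη : (r : ℝ≥0∞) * η ≠ 0 := mul_ne_zero (by exact_mod_cast hr.ne') hη.ne'
  obtain ⟨g₀, hg₀, -⟩ := (Integrable.of_bound (μ := m) hm.aestronglyMeasurable M (.of_forall hM))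
    |>.exists_boundedContinuous_lintegral_sub_le hrη
  have hdiff : Measurable fun t => ‖h t - g₀ t‖ₑ :=
    (hm.sub g₀.continuous.stronglyMeasurable).measurable.enorm
  set E := {t | (r : ℝ≥0∞) ≤ ‖h t - g₀ t‖ₑ}
  have hEm : MeasurableSet E := measurableSet_le measurable_const hdiff
  have hmE : m E < δ := by
    refine lt_of_le_of_lt ?_ hηδ
    refine (ENNReal.mul_le_mul_iff_right (by exact_mod_cast hr.ne') ENNReal.coe_ne_top).1 ?_
    exact (mul_meas_ge_le_lintegral₀ hdiff.aemeasurable _).trans hg₀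
  refine ⟨clampC M ∘ g₀, (continuous_clampC M).comp g₀.continuous, ?_⟩
  have hoff : ∀ t ∉ E, ‖(h - clampC M ∘ g₀) t‖ ≤ r := fun t ht => by
    have : ‖h t - g₀ t‖ₑ < r := not_le.1 ht
    rw [Pi.sub_apply, Function.comp_apply, norm_sub_rev, ← dist_eq_norm]
    refine (dist_clampC_le (hM t) _).trans ?_
    rw [dist_eq_norm, norm_sub_rev]
    exact_mod_cast (enorm_lt_coe.1 this).le
  have hbound : ∀ t, ‖(h - clampC M ∘ g₀) t‖ ≤ (3 * M : ℝ≥0) := fun t => by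
    calc ‖(h - clampC M ∘ g₀) t‖ ≤ ‖h t‖ + ‖clampC M (g₀ t)‖ := norm_sub_le _ _
      _ ≤ M + 2 * M := add_le_add (hM t) (norm_clampC_le M _)
      _ = (3 * M : ℝ≥0) := by push_cast; ring
  calc ρ.N (h - clampC M ∘ g₀) ≤ r * ρ.ρ 1 + (3 * M : ℝ≥0) * ρ.ρ (E.indicator 1) :=
        N_le_of_norm_le_of_notMem hoff hbound
    _ < ε / 2 + ε / 2 :=
        ENNReal.add_lt_add hrρ (ENNReal.mul_lt_of_lt_div' (hδρ E hEm hmE))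
    _ = ε := ENNReal.add_halves ε

lemma Separable.exists_bounded_N_sub_lt (hsep : ρ.Separable) {f : UC → ℂ} (hf : ρ.mem f)
    {ε : ℝ≥0∞} (hε : 0 < ε) : ∃ (h : UC → ℂ) (M : ℝ≥0), StronglyMeasurable h ∧
      (∀ t, ‖h t‖ ≤ M) ∧ ρ.N (f - h) < ε := by
  set f' := hf.1.mk f
  have hf'm : StronglyMeasurable f' := hf.1.stronglyMeasurable_mk
  have hf' : ρ.mem f' := ⟨hf'm.aestronglyMeasurable, N_congr hf.1.ae_eq_mk ▸ hf.2⟩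
  set E : ℕ → Set UC := fun n => {t | (n : ℝ) < ‖f' t‖}
  obtain ⟨n, hn⟩ := hsep.exists_N_indicator_lt_of_antitone hf' (E := E)
    (fun n => measurableSet_lt measurable_const hf'm.measurable.norm)
    (fun a b hab t (ht : (b : ℝ) < _) => (Nat.cast_le.2 hab).trans_lt ht)
    (.of_forall fun t => (exists_nat_ge ‖f' t‖).imp fun _ h => h.not_gt) hε
  refine ⟨(E n)ᶜ.indicator f', n, hf'm.indicator (measurableSet_lt measurable_const
    hf'm.measurable.norm).compl, fun t => ?_, ?_⟩
  · by_cases ht : t ∈ E n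
    · simp [ht]
    · rw [indicator_of_mem (s := (E n)ᶜ) ht]
      exact not_lt.1 ht
  · rwa [N_congr (hf.1.ae_eq_mk.sub .rfl), indicator_compl, sub_sub_cancel]

lemma Separable.denseIn_continuous (hsep : ρ.Separable) :
    ρ.DenseIn {f : UC → ℂ | Continuous f} := by
  intro f hf ε hε
  obtain ⟨h, M, hm, hM, hfh⟩ := hsep.exists_bounded_N_sub_lt hf (ENNReal.half_pos hε.ne')
  obtain ⟨g, hg, hhg⟩ := hsep.exists_continuous_N_sub_lt_of_norm_le hm hM
    (ENNReal.half_pos hε.ne')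
  exact ⟨g, hg, N_sub_lt_of_lt_half hfh hhg⟩

end BFNorm

theorem stmt7 (ρ : BFNorm) :
    (ρ.DenseIn TrigPoly ↔ ρ.Separable) ∧
    (ρ.DenseIn {f : UC → ℂ | Continuous f} ↔ ρ.Separable) :=
  ⟨⟨fun h => (h.mono fun _ => continuous_of_mem_trigPoly).separable_of_continuous,
      fun h => h.denseIn_continuous.trigPoly_of_continuous⟩,
    ⟨BFNorm.DenseIn.separable_of_continuous, BFNorm.Separable.denseIn_continuous⟩⟩
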